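/- Let S be a Stallings section for an m-epi π : Ã* → G and let L ⊆ Ã* be a regular language. Then S_{Lπ} = (Lπ)π⁻¹ ∩ S is a regular language. -/

import Mathlib

/-!  Common framework: words over an involutive alphabet Ã = A ∪ A⁻¹ (modelled as
`α × Bool`), free reduction, matched epimorphisms, Stallings sections and
Ã-automata, following Silva–Soler-Escrivà–Ventura. -/

/-- A word over the involutive alphabet Ã = A ∪ A⁻¹: the letter `(a, tt)` denotes
`a` and `(a, ff)` denotes `a⁻¹` (the `FreeGroup` convention). -/
abbrev Word (α : Type) : Type := List (α × Bool)

namespace Stallings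

instance {β : Type} : HasSubset (Language β) := ⟨fun L M => ∀ w ∈ L, w ∈ M⟩
instance {β : Type} : Union (Language β) := ⟨fun L M => {w | w ∈ L ∨ w ∈ M}⟩
instance {β : Type} : Inter (Language β) := ⟨fun L M => {w | w ∈ L ∧ w ∈ M}⟩
instance {β : Type} : EmptyCollection (Language β) := ⟨(∅ : Set (List β))⟩

variable {α : Type} {G : Type} [Group G]

/-- The formal inverse of a letter of Ã. -/
def letterInv (x : α × Bool) : α × Bool := (x.1, !x.2)

/-- The formal inverse `w⁻¹` of a word over Ã. -/
def wordInv (w : Word α) : Word α := (w.map letterInv).reverse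

/-- The free reduction `w̄` of a word over Ã (iterated deletion of factors `a a⁻¹`). -/
noncomputable def redW (w : Word α) : Word α :=
  letI := Classical.decEq α
  FreeGroup.reduce w

/-- The reduction `L̄` of a language over Ã. -/
noncomputable def red (L : Language (α × Bool)) : Language (α × Bool) :=
  redW '' L

/-- The set `R_A` of reduced words over Ã. -/
noncomputable def Reduced : Language (α × Bool) := {w | redW w = w}

/-- Evaluation of a monoid homomorphism `π : Ã* → G` at a word. -/
def ev (π : FreeMonoid (α × Bool) →* G) (w : Word α) : G :=
  π (FreeMonoid.ofList w)

/-- The image of a language under (evaluation of) `π`. -/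
def evImg (π : FreeMonoid (α × Bool) →* G) (L : Language (α × Bool)) : Set G :=
  {g | ∃ w ∈ L, ev π w = g}

/-- A matched epimorphism (m-epi) `π : Ã* → G`: a surjective monoid homomorphism
sending formal inverses to inverses. -/
structure IsMEpi (π : FreeMonoid (α × Bool) →* G) : Prop where
  surjective : Function.Surjective π
  matched : ∀ (a : α) (b : Bool),
    π (FreeMonoid.of (a, !b)) = (π (FreeMonoid.of (a, b)))⁻¹

/-- `S_X = Xπ⁻¹ ∩ S`, for `X ⊆ G`. -/
def sub (S : Language (α × Bool)) (π : FreeMonoid (α × Bool) →* G) (X : Set G) :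
    Language (α × Bool) :=
  {w ∈ S | ev π w ∈ X}

/-- A Stallings section for an m-epi `π : Ã* → G`: a regular section `S ⊆ R_A`
such that each `S_g` is regular (S1), and `S_{gh} ⊆ (S_g S_h)‾` (S2). -/
structure IsStallingsSection (π : FreeMonoid (α × Bool) →* G)
    (S : Language (α × Bool)) : Prop where
  regular : S.IsRegular
  reduced : S ⊆ Reduced
  inv_mem : ∀ w ∈ S, wordInv w ∈ S
  exists_rep : ∀ g : G, ∃ w ∈ S, ev π w = g
  s1 : ∀ g : G, (sub S π {g}).IsRegular
  s2 : ∀ g h : G, sub S π {g * h} ⊆ red (sub S π {g} * sub S π {h})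

/-- A group has a Stallings section if some m-epi onto it (from the free monoid on
an involutive finite alphabet) admits a Stallings section. -/
def HasStallingsSection (G : Type) [Group G] : Prop :=
  ∃ (α : Type) (π : FreeMonoid (α × Bool) →* G) (S : Language (α × Bool)),
    Finite α ∧ IsMEpi π ∧ IsStallingsSection π S

/-- `Pref L`: the set of prefixes of words of `L`. -/
def Pref (L : Language (α × Bool)) : Language (α × Bool) :=
  {u | ∃ v, u ++ v ∈ L}

/-- An extendable Stallings section: every `u ∈ S` admits a reduced word `v` with
`u vⁿ ∈ S` for all `n` and `u ∈ Pref (S_{(u vⁿ u⁻¹)π})` for almost all `n`. -/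
def Extendable (π : FreeMonoid (α × Bool) →* G) (S : Language (α × Bool)) : Prop :=
  ∀ u ∈ S, ∃ v : Word α, v ∈ Reduced ∧
    (∀ n : ℕ, u ++ (List.replicate n v).flatten ∈ S) ∧
    ∃ N : ℕ, ∀ n ≥ N, u ∈ Pref (sub S π {ev π u * (ev π v) ^ n * (ev π u)⁻¹})

/-- An Ã-automaton with state type `Q`, initial state `start`, terminal states
`accept` and edge set `edges`. -/
structure Automaton (β : Type) (Q : Type) where
  start : Q
  accept : Set Q
  edges : Set (Q × β × Q)

namespace Automaton

variable {β Q : Type}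

/-- `M.Path p w q`: there is a path from `p` to `q` labelled `w`. -/
inductive Path (M : Automaton β Q) : Q → List β → Q → Prop
  | nil (q : Q) : Path M q [] q
  | cons {p q r : Q} {a : β} {w : List β} :
      (p, a, q) ∈ M.edges → Path M q w r → Path M p (a :: w) r

/-- The language recognized by an automaton. -/
def lang (M : Automaton β Q) : Language β :=
  {w | ∃ t ∈ M.accept, M.Path M.start w t}

/-- A trim automaton: every state lies on some successful path. -/
def Trim (M : Automaton β Q) : Prop :=
  ∀ q : Q, ∃ (u v : List β) (t : Q), t ∈ M.accept ∧ M.Path M.start u q ∧ M.Path q v t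

/-- An involutive Ã-automaton. -/
def Involutive {α : Type} (M : Automaton (α × Bool) Q) : Prop :=
  ∀ p a q, (p, a, q) ∈ M.edges → (q, letterInv a, p) ∈ M.edges

/-- A deterministic automaton. -/
def Deterministic (M : Automaton β Q) : Prop :=
  ∀ p a q q', (p, a, q) ∈ M.edges → (p, a, q') ∈ M.edges → q = q'

/-- An inverse automaton: involutive, deterministic, trim, with a single
terminal state. -/
def IsInverse {α : Type} (M : Automaton (α × Bool) Q) : Prop :=
  M.Involutive ∧ M.Deterministic ∧ M.Trim ∧ ∃ t : Q, M.accept = {t}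

/-- The automaton obtained by identifying the states `p` and `q` (the quotient is
realized on the same state type, redirecting `q` to `p`). -/
def merge [DecidableEq Q] (M : Automaton β Q) (p q : Q) : Automaton β Q :=
  let f : Q → Q := fun x => if x = q then p else x
  { start := f M.start
    accept := f '' M.accept
    edges := {e | ∃ e' ∈ M.edges, e = (f e'.1, e'.2.1, f e'.2.2)} }

end Automaton

end Stallings
/-! The words of `S` with value in `Lπ` are those of `S ∩ X↓`, together with `S_1` when the empty
word lies in `L`; here `X = L[a ↦ S_{aπ}]` is the substitution of `S_{aπ}` for each letter `a`,
and `X↓` is the set of words obtained from words of `X` by free reductions. Iterating (S2) along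
`a₁ ⋯ aₙ ∈ L` shows that every `w ∈ S_{(a₁⋯aₙ)π}` is a reduct of a word of `S_{a₁π} ⋯ S_{aₙπ}`;
conversely reductions preserve values under an m-epi. Regularity follows from two closure
properties of regular languages: under substitution of regular languages for letters (by (S1)),
and under `X ↦ X↓` (Benois): `X↓` is recognised by the automaton of `X` in which `p` has an
`a`-edge to `q` whenever a word reducing to `a` leads from `p` to `q`. -/

theorem NFA.isRegular_accepts {α σ : Type*} [Finite σ] (N : NFA α σ) : N.accepts.IsRegular := by
  have := Fintype.ofFinite σ
  exact Language.isRegular_iff.2 ⟨Set σ, inferInstance, N.toDFA, N.toDFA_correct⟩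

theorem εNFA.isRegular_accepts {α σ : Type*} [Finite σ] (E : εNFA α σ) : E.accepts.IsRegular :=
  E.toNFA_correct ▸ E.toNFA.isRegular_accepts

theorem NFA.mem_acceptsFrom_iff_exists {α σ : Type*} (N : NFA α σ) {S : Set σ} {x : List α} :
    x ∈ N.acceptsFrom S ↔ ∃ s ∈ S, x ∈ N.acceptsFrom {s} := by
  simp only [NFA.mem_acceptsFrom, N.mem_evalFrom_iff_exists (S := S)]
  exact ⟨fun ⟨t, ht, s, hs, hst⟩ => ⟨s, hs, t, ht, hst⟩,
    fun ⟨s, hs, t, ht, hst⟩ => ⟨t, ht, s, hs, hst⟩⟩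

namespace Language

variable {α β γ : Type*}

def redClosure (X : Language (α × Bool)) : Language (α × Bool) :=
  {w | ∃ x ∈ X, FreeGroup.Red x w}

theorem le_redClosure (X : Language (α × Bool)) : X ≤ X.redClosure :=
  fun x hx => ⟨x, hx, FreeGroup.Red.refl⟩

def subst (K : β → Language γ) (L : Language β) : Language γ :=
  {x | ∃ u ∈ L, x ∈ (u.map K).prod}

end Language

namespace DFA

section RedSaturation

variable {α σ : Type*} (M : DFA (α × Bool) σ)

def redSaturation : NFA (α × Bool) σ where
  step p a := {q | ∃ y, M.evalFrom p y = q ∧ FreeGroup.Red y [a]}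
  start := {M.start}
  accept := {p | ∃ y ∈ M.acceptsFrom p, FreeGroup.Red y []}

theorem mem_redSaturation_acceptsFrom (w : List (α × Bool)) (p : σ) :
    w ∈ M.redSaturation.acceptsFrom {p} ↔ ∃ y ∈ M.acceptsFrom p, FreeGroup.Red y w := by
  induction w generalizing p with
  | nil => simp [redSaturation]
  | cons a w ih =>
    rw [NFA.cons_mem_acceptsFrom, NFA.stepSet_singleton, NFA.mem_acceptsFrom_iff_exists]
    constructor
    · rintro ⟨_, ⟨y₁, rfl, h₁⟩, hw⟩
      obtain ⟨y₂, hy₂, h₂⟩ := (ih _).1 hw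
      refine ⟨y₁ ++ y₂, ?_, FreeGroup.Red.append_append h₁ h₂⟩
      rwa [mem_acceptsFrom, evalFrom_of_append]
    · rintro ⟨y, hy, h⟩
      obtain ⟨y₁, y₂, rfl, h₁, h₂⟩ :=
        FreeGroup.Red.to_append_iff.1 (show FreeGroup.Red y ([a] ++ w) from h)
      refine ⟨_, ⟨y₁, rfl, h₁⟩, (ih _).2 ⟨y₂, ?_, h₂⟩⟩
      rwa [mem_acceptsFrom, evalFrom_of_append] at hy

theorem accepts_redSaturation : M.redSaturation.accepts = M.accepts.redClosure :=
  Set.ext fun w => M.mem_redSaturation_acceptsFrom w M.start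

end RedSaturation

section Subst

variable {β γ σ : Type*} {τ : β → Type*} (M : DFA β σ) (D : ∀ b, DFA γ (τ b))

/-- In state `.inl q` the automaton sits between blocks, at state `q` of `M`; in state
`.inr (q, ⟨b, s⟩)` it reads a word of `(D b).accepts`, currently at state `s` of `D b`, and
returns to `.inl (M.step q b)` by an ε-move once `s` is accepting. -/
def substεNFA : εNFA γ (σ ⊕ σ × (Σ b, τ b)) where
  step
    | .inl q, none => Set.range fun b => .inr (q, ⟨b, (D b).start⟩)
    | .inl _, some _ => ∅
    | .inr (q, ⟨b, s⟩), none => {c | s ∈ (D b).accept ∧ c = .inl (M.step q b)}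
    | .inr (q, ⟨b, s⟩), some c => {.inr (q, ⟨b, (D b).step s c⟩)}
  start := {.inl M.start}
  accept := Sum.inl '' M.accept

def substStateLang : σ ⊕ σ × (Σ b, τ b) → Language γ
  | .inl q => (M.acceptsFrom q).subst fun b => (D b).accepts
  | .inr (q, ⟨b, s⟩) =>
    (D b).acceptsFrom s * (M.acceptsFrom (M.step q b)).subst fun b => (D b).accepts

variable {M D}

theorem reduceOption_mem_substStateLang {c d : σ ⊕ σ × (Σ b, τ b)} {x : List (Option γ)}
    (h : (M.substεNFA D).IsPath c d x) (hd : d ∈ (M.substεNFA D).accept) :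
    x.reduceOption ∈ M.substStateLang D c := by
  induction h with
  | nil c =>
    obtain ⟨q, hq, rfl⟩ := hd
    exact ⟨[], hq, Language.nil_mem_one⟩
  | cons c' c d a x hstep _ ih =>
    specialize ih hd
    rcases c with q | ⟨q, b, s⟩ <;> rcases a with _ | e
    · obtain ⟨b, rfl⟩ := hstep
      obtain ⟨y, hy, z, ⟨u, hu, hz⟩, hyz⟩ := Language.mem_mul.1 ih
      rw [List.reduceOption_cons_of_none, ← hyz]
      exact ⟨b :: u, hu, Language.append_mem_mul hy hz⟩
    · exact hstep.elim
    · obtain ⟨hs, rfl⟩ := hstep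
      rw [List.reduceOption_cons_of_none]
      exact Language.mem_mul.2 ⟨[], hs, _, ih, rfl⟩
    · rw [Set.mem_singleton_iff.1 hstep] at ih
      obtain ⟨y, hy, z, hz, hyz⟩ := Language.mem_mul.1 ih
      rw [List.reduceOption_cons_of_some, ← hyz]
      exact Language.mem_mul.2 ⟨e :: y, hy, z, hz, rfl⟩

theorem isPath_substεNFA_block (q : σ) (b : β) (y : List γ) (s : τ b) :
    (M.substεNFA D).IsPath (.inr (q, ⟨b, s⟩)) (.inr (q, ⟨b, (D b).evalFrom s y⟩))
      (y.map some) := by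
  induction y generalizing s with
  | nil => exact .nil _
  | cons e y ih => exact .cons _ _ _ _ _ rfl (ih _)

theorem exists_isPath_substεNFA {q : σ} {w : List β} (hw : w ∈ M.acceptsFrom q)
    {x : List γ} (hx : x ∈ (w.map fun b => (D b).accepts).prod) :
    ∃ d ∈ (M.substεNFA D).accept, ∃ x' : List (Option γ),
      x'.reduceOption = x ∧ (M.substεNFA D).IsPath (.inl q) d x' := by
  induction w generalizing q x with
  | nil =>
    obtain rfl := (Language.mem_one x).1 hx
    exact ⟨_, ⟨q, hw, rfl⟩, [], rfl, .nil _⟩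
  | cons b w ih =>
    obtain ⟨y, hy, z, hz, rfl⟩ := Language.mem_mul.1 hx
    obtain ⟨d, hd, z', rfl, hz'⟩ := ih hw hz
    refine ⟨d, hd, none :: (y.map some ++ none :: z'),
      by simp [List.reduceOption, List.filterMap_map], ?_⟩
    refine .cons _ _ _ _ _ ⟨b, rfl⟩
      ((εNFA.isPath_append _).2 ⟨_, isPath_substεNFA_block q b y _, ?_⟩)
    exact .cons _ _ _ _ _ ⟨hy, rfl⟩ hz'

theorem accepts_substεNFA :
    (M.substεNFA D).accepts = M.accepts.subst fun b => (D b).accepts := by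
  ext x
  rw [εNFA.mem_accepts_iff_exists_path]
  constructor
  · rintro ⟨_, d, x', rfl, hd, rfl, h⟩
    exact reduceOption_mem_substStateLang h hd
  · rintro ⟨w, hw, hx⟩
    obtain ⟨d, hd, x', rfl, h⟩ := exists_isPath_substεNFA hw hx
    exact ⟨_, d, x', rfl, hd, rfl, h⟩

end Subst

end DFA

namespace Language.IsRegular

theorem redClosure {α : Type*} {X : Language (α × Bool)} (hX : X.IsRegular) :
    X.redClosure.IsRegular := by
  obtain ⟨σ, _, M, rfl⟩ := hX
  exact M.accepts_redSaturation ▸ M.redSaturation.isRegular_accepts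

theorem subst {β γ : Type*} [Finite β] {K : β → Language γ} (hK : ∀ b, (K b).IsRegular)
    {L : Language β} (hL : L.IsRegular) : (L.subst K).IsRegular := by
  obtain ⟨σ, _, M, rfl⟩ := hL
  choose τ _ D hD using hK
  obtain rfl : K = fun b => (D b).accepts := funext fun b => (hD b).symm
  exact M.accepts_substεNFA ▸ (M.substεNFA D).isRegular_accepts

end Language.IsRegular

namespace Stallings

variable {α G : Type} [Group G] {π : FreeMonoid (α × Bool) →* G}

theorem ev_append (π : FreeMonoid (α × Bool) →* G) (u v : Word α) :
    ev π (u ++ v) = ev π u * ev π v :=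
  map_mul π _ _

theorem ev_cons (π : FreeMonoid (α × Bool) →* G) (a : α × Bool) (w : Word α) :
    ev π (a :: w) = π (FreeMonoid.of a) * ev π w :=
  ev_append π [a] w

theorem red_redW (w : Word α) : FreeGroup.Red w (redW w) :=
  letI := Classical.decEq α
  FreeGroup.reduce.red

theorem IsMEpi.ev_eq_of_red (hπ : IsMEpi π) {x y : Word α} (h : FreeGroup.Red x y) :
    ev π x = ev π y := by
  induction h with
  | refl => rfl
  | tail _ hstep ih =>
    obtain ⟨L₁, L₂, a, b⟩ := hstep
    rw [ih, ev_append, ev_append, ev_cons, ev_cons, hπ.matched, mul_inv_cancel_left]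

theorem ev_eq_of_mem_prod_map {K : α × Bool → Language (α × Bool)}
    (hK : ∀ b, ∀ x ∈ K b, ev π x = ev π [b]) {u x : Word α} (hx : x ∈ (u.map K).prod) :
    ev π x = ev π u := by
  induction u generalizing x with
  | nil => rw [(Language.mem_one x).1 hx]
  | cons b u ih =>
    obtain ⟨y, hy, z, hz, rfl⟩ := Language.mem_mul.1 hx
    rw [ev_append, hK b y hy, ih hz]
    exact (ev_append π [b] u).symm

theorem IsStallingsSection.sub_ev_le_redClosure {S : Language (α × Bool)}
    (hS : IsStallingsSection π S) (a : α × Bool) (u : Word α) :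
    sub S π {ev π (a :: u)} ≤ (((a :: u).map fun b => sub S π {ev π [b]}).prod).redClosure := by
  induction u generalizing a with
  | nil => simpa using Language.le_redClosure _
  | cons b u ih =>
    intro w hw
    rw [← List.singleton_append, ev_append] at hw
    obtain ⟨_, hyz, rfl⟩ := hS.s2 _ _ w hw
    obtain ⟨y, hy, z, hz, rfl⟩ := Language.mem_mul.1 hyz
    obtain ⟨x, hx, hxz⟩ := ih b hz
    exact ⟨y ++ x, Language.append_mem_mul hy hx,
      (FreeGroup.Red.append_append .refl hxz).trans (red_redW _)⟩

open scoped Classical in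
theorem sub_evImg_eq (hπ : IsMEpi π) {S : Language (α × Bool)} (hS : IsStallingsSection π S)
    (L : Language (α × Bool)) :
    sub S π (evImg π L) = S ⊓ (L.subst fun b => sub S π {ev π [b]}).redClosure +
      if [] ∈ L then sub S π {1} else 0 := by
  ext w
  rw [Language.mem_add]
  constructor
  · rintro ⟨hwS, _ | ⟨a, u⟩, huL, hu⟩
    · rw [if_pos huL]
      exact Or.inr ⟨hwS, hu ▸ map_one π⟩
    · obtain ⟨x, hx, hxw⟩ := hS.sub_ev_le_redClosure a u ⟨hwS, hu.symm⟩
      exact Or.inl ⟨hwS, x, ⟨a :: u, huL, hx⟩, hxw⟩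
  · rintro (⟨hwS, x, ⟨u, huL, hx⟩, hxw⟩ | hw)
    · refine ⟨hwS, u, huL, ?_⟩
      rw [← hπ.ev_eq_of_red hxw, ev_eq_of_mem_prod_map (fun b y hy => hy.2) hx]
    · split_ifs at hw with hnil
      · exact ⟨hw.1, [], hnil, (map_one π).trans hw.2.symm⟩
      · exact absurd hw (Language.notMem_zero w)

end Stallings

open Stallings in
/-- (Generalized Benois theorem.) Let `S` be a Stallings section for
the m-epi `π` and let `L ⊆ Ã*` be regular. Then `S_{Lπ} = (Lπ)π⁻¹ ∩ S` is a
regular language. -/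
theorem sub_image_isRegular {α G : Type} [Finite α] [Group G]
    (π : FreeMonoid (α × Bool) →* G) (hπ : IsMEpi π)
    (S : Language (α × Bool)) (hS : IsStallingsSection π S)
    (L : Language (α × Bool)) (hL : L.IsRegular) :
    (sub S π (evImg π L)).IsRegular := by
  have hY := hS.regular.inf (hL.subst fun b => hS.s1 (ev π [b])).redClosure
  rw [sub_evImg_eq hπ hS L]
  split_ifs
  · exact hY.add (hS.s1 1)
  · rwa [add_zero]
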